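/- arXiv:2301.13584 — 3 statements merged into one kernel-verified Lean document; each statement's English description precedes it below -/
import Mathlib

section
/- For every oracle trajectory, every index i ∈ S* and every t ≥ 1, the counting vector satisfies c^t_i ≤ 2‖X⁰‖_∞ / (η |x*_i|) + 1. -/
noncomputable section
open Finset Matrix

/-- Support of a vector as a finite set of indices. -/
def spt {d : ℕ} (x : Fin d → ℝ) : Finset (Fin d) :=
  Finset.univ.filter (fun i => x i ≠ 0)

/-- Euclidean (ℓ²) norm of a vector. -/
def l2norm {d : ℕ} (v : Fin d → ℝ) : ℝ :=
  Real.sqrt (∑ i, (v i) ^ 2)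

/-- Sup (ℓ∞) norm of a vector. -/
def supNorm {d : ℕ} (v : Fin d → ℝ) : ℝ :=
  ⨆ i, |v i|

/-- An oracle trajectory with step size `η > 0` and initialization `X0`. -/
structure OracleTraj {n : ℕ} (k : ℕ) (xstar : Fin n → ℝ) (η : ℝ) (X0 : Fin n → ℝ) where
  S : ℕ → Finset (Fin n)
  X : ℕ → Fin n → ℝ
  X_init : X 0 = X0
  card_S : ∀ t, (S t).card = k
  sel : ∀ t, ∀ i ∈ S t, ∀ j, j ∉ S t → |X t j| ≤ |X t i|
  upd : ∀ t i, X (t + 1) i = if xstar i ≠ 0 ∧ i ∉ S t then X t i + η * xstar i else X t i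

/-- Counting vector: `c^t_i = #{t' ∈ {0,…,t−1} : i ∈ S* \ S^{t'}}`. -/
def countVec {n : ℕ} (S : ℕ → Finset (Fin n)) (xstar : Fin n → ℝ) (t : ℕ) (i : Fin n) : ℕ :=
  ((Finset.range t).filter (fun t' => xstar i ≠ 0 ∧ i ∉ S t')).card

lemma X_formula {n k : ℕ} {xstar : Fin n → ℝ} {η : ℝ} {X0 : Fin n → ℝ}
    (traj : OracleTraj k xstar η X0) (i : Fin n) (t : ℕ) :
    traj.X t i = X0 i + η * xstar i * countVec traj.S xstar t i := by
  induction t with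
  | zero => simp [countVec, traj.X_init]
  | succ t ih =>
    rw [traj.upd t i]
    have hc : countVec traj.S xstar (t+1) i =
        countVec traj.S xstar t i + (if xstar i ≠ 0 ∧ i ∉ traj.S t then 1 else 0) := by
      unfold countVec
      rw [Finset.range_add_one, Finset.filter_insert]
      split
      · rw [Finset.card_insert_of_notMem (by simp)]
      · simp
    rw [hc]
    split <;> push_cast <;> rw [ih] <;> ring

/-- Upper bound on the counting vector for an oracle trajectory. -/
theorem oracle_counting_upper_bound {n k : ℕ} (hk : 0 < k) (hkn : k ≤ n)
    (xstar : Fin n → ℝ) (hspars : (spt xstar).card ≤ k) (hne : (spt xstar).Nonempty)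
    (η : ℝ) (hη : 0 < η) (X0 : Fin n → ℝ)
    (traj : OracleTraj k xstar η X0)
    (i : Fin n) (hi : i ∈ spt xstar)
    (t : ℕ) (ht : 1 ≤ t) :
    (countVec traj.S xstar t i : ℝ) ≤ 2 * supNorm X0 / (η * |xstar i|) + 1 := by
  have hxi : xstar i ≠ 0 := by simpa [spt] using hi
  have hpos : 0 < η * |xstar i| := by positivity
  have hMle : ∀ j, |X0 j| ≤ supNorm X0 := by
    intro j
    unfold supNorm
    exact le_ciSup (Set.Finite.bddAbove (Set.finite_range fun j => |X0 j|)) j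
  have hM0 : 0 ≤ supNorm X0 := le_trans (abs_nonneg _) (hMle i)
  have hdivnn : 0 ≤ 2 * supNorm X0 / (η * |xstar i|) := by positivity
  by_cases hc : countVec traj.S xstar t i = 0
  · rw [hc]; push_cast; linarith
  · set F := (Finset.range t).filter (fun t' => xstar i ≠ 0 ∧ i ∉ traj.S t') with hF_def
    have hF : F.Nonempty := Finset.card_pos.mp (Nat.pos_of_ne_zero hc)
    set t' := F.max' hF with ht'_def
    have ht'F : t' ∈ F := F.max'_mem hF
    have hiS : i ∉ traj.S t' := (Finset.mem_filter.mp ht'F).2.2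
    have hex : ∃ j ∈ traj.S t', j ∉ spt xstar := by
      by_contra h
      push_neg at h
      have hsub : traj.S t' ⊆ (spt xstar).erase i := fun j hj =>
        Finset.mem_erase.mpr ⟨fun he => hiS (he ▸ hj), h j hj⟩
      have hcard := Finset.card_le_card hsub
      rw [Finset.card_erase_of_mem hi, traj.card_S] at hcard
      have hsptpos : 0 < (spt xstar).card := Finset.card_pos.mpr hne
      omega
    obtain ⟨j, hjS, hjspt⟩ := hex
    have hxj : xstar j = 0 := by
      by_contra h
      exact hjspt (by simp [spt, h])
    have hXj : traj.X t' j = X0 j := by rw [X_formula traj j t', hxj]; ring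
    have hsel := traj.sel t' j hjS i hiS
    rw [hXj] at hsel
    have h1 : |traj.X t' i| ≤ supNorm X0 := hsel.trans (hMle j)
    have hXi := X_formula traj i t'
    have h2 : η * |xstar i| * (countVec traj.S xstar t' i : ℝ) ≤ 2 * supNorm X0 := by
      have habs : |traj.X t' i - X0 i| =
          η * |xstar i| * (countVec traj.S xstar t' i : ℝ) := by
        rw [hXi]
        have : X0 i + η * xstar i * (countVec traj.S xstar t' i : ℝ) - X0 i =
            η * xstar i * (countVec traj.S xstar t' i : ℝ) := by ring
        rw [this, abs_mul, abs_mul, abs_of_pos hη,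
          Nat.abs_cast]
      have htri : |traj.X t' i - X0 i| ≤ |traj.X t' i| + |X0 i| := abs_sub _ _
      have := hMle i
      linarith [habs ▸ htri]
    have h3 : countVec traj.S xstar t i ≤ countVec traj.S xstar t' i + 1 := by
      have hsub : F ⊆ insert t'
          ((Finset.range t').filter (fun t'' => xstar i ≠ 0 ∧ i ∉ traj.S t'')) := by
        intro s hs
        rcases eq_or_lt_of_le (F.le_max' s hs) with h | h
        · exact Finset.mem_insert.mpr (Or.inl h)
        · refine Finset.mem_insert.mpr (Or.inr ?_)
          rw [Finset.mem_filter] at hs ⊢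
          exact ⟨Finset.mem_range.mpr h, hs.2⟩
      calc countVec traj.S xstar t i = F.card := rfl
        _ ≤ _ := Finset.card_le_card hsub
        _ ≤ _ := Finset.card_insert_le _ _
        _ = countVec traj.S xstar t' i + 1 := by simp [countVec, Nat.add_comm]
    have h2' : (countVec traj.S xstar t' i : ℝ) ≤ 2 * supNorm X0 / (η * |xstar i|) := by
      rw [le_div_iff₀ hpos]; linarith
    have h3' : (countVec traj.S xstar t i : ℝ) ≤ (countVec traj.S xstar t' i : ℝ) + 1 := by
      exact_mod_cast h3
    linarith

end
end

section
/- Assume k < n and b_max < 1 / (2 Σ_{i∈S*} 1/(η|x*_i|)). Define T'_max = (Σ_{i∈S*} (max_{j∉S*}|X⁰_j| + |X⁰_i|)/(η|x*_i|) + k + 1) / (1 − 2 b_max Σ_{i∈S*} 1/(η|x*_i|)) and, for i ∈ S*, the counting threshold c̄_i = (max_{j∉S*}|X⁰_j| + |X⁰_i| + 2 T'_max b_max)/(η|x*_i|). Then for every SEA trajectory, every i ∈ S* and every t ≤ T'_max, one has c^t_i ≤ c̄_i + 1. -/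
noncomputable section
open Finset Matrix

/-- The oracle update direction `u^t` (for current support `S`):
`u_i = -η x*_i` for `i ∈ S* \ S` and `u_i = 0` otherwise. -/
def oracleUpd {n : ℕ} (xstar : Fin n → ℝ) (η : ℝ) (S : Finset (Fin n)) : Fin n → ℝ :=
  fun i => if xstar i ≠ 0 ∧ i ∉ S then -η * xstar i else 0

/-- The gradient noise `b = u - η Aᵀ(A x - y)`. -/
def gradNoise {m n : ℕ} (A : Matrix (Fin m) (Fin n) ℝ) (y : Fin m → ℝ)
    (xstar : Fin n → ℝ) (η : ℝ) (S : Finset (Fin n)) (xt : Fin n → ℝ) : Fin n → ℝ :=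
  oracleUpd xstar η S - η • (Aᵀ.mulVec (A.mulVec xt - y))

/-- A SEA trajectory with step size `η` and initialization `X0`. -/
structure SEATraj {m n : ℕ} (k : ℕ) (A : Matrix (Fin m) (Fin n) ℝ) (y : Fin m → ℝ)
    (η : ℝ) (X0 : Fin n → ℝ) where
  S : ℕ → Finset (Fin n)
  x : ℕ → Fin n → ℝ
  X : ℕ → Fin n → ℝ
  X_init : X 0 = X0
  card_S : ∀ t, (S t).card = k
  sel : ∀ t, ∀ i ∈ S t, ∀ j, j ∉ S t → |X t j| ≤ |X t i|
  x_supp : ∀ t, ∀ i, i ∉ S t → x t i = 0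
  x_min : ∀ t, ∀ z : Fin n → ℝ, (∀ i, i ∉ S t → z i = 0) →
    l2norm (A.mulVec (x t) - y) ≤ l2norm (A.mulVec z - y)
  X_upd : ∀ t, X (t + 1) = X t - η • (Aᵀ.mulVec (A.mulVec (x t) - y))

/-- `max_{j ∉ S*} |X⁰_j|`. -/
def maxOff {n : ℕ} (xstar X0 : Fin n → ℝ) : ℝ :=
  ⨆ j : {j : Fin n // xstar j = 0}, |X0 j.1|

/-- `T'_max = (Σ_{i∈S*} (max_{j∉S*}|X⁰_j| + |X⁰_i|)/(η|x*_i|) + k + 1)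
    / (1 − 2 b_max Σ_{i∈S*} 1/(η|x*_i|))`. -/
def TmaxP {n : ℕ} (k : ℕ) (xstar X0 : Fin n → ℝ) (η bmax : ℝ) : ℝ :=
  ((∑ i ∈ spt xstar, (maxOff xstar X0 + |X0 i|) / (η * |xstar i|)) + k + 1) /
    (1 - 2 * bmax * ∑ i ∈ spt xstar, 1 / (η * |xstar i|))

/-- Counting threshold `c̄_i = (max_{j∉S*}|X⁰_j| + |X⁰_i| + 2 T'_max b_max)/(η|x*_i|)`. -/
def cbar {n : ℕ} (k : ℕ) (xstar X0 : Fin n → ℝ) (η bmax : ℝ) (i : Fin n) : ℝ :=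
  (maxOff xstar X0 + |X0 i| + 2 * TmaxP k xstar X0 η bmax * bmax) / (η * |xstar i|)

lemma abs_le_supNorm {d : ℕ} (v : Fin d → ℝ) (i : Fin d) : |v i| ≤ supNorm v :=
  le_ciSup (Set.Finite.bddAbove (Set.finite_range (fun j => |v j|))) i

lemma countVec_succ {n : ℕ} (S : ℕ → Finset (Fin n)) (xstar : Fin n → ℝ) (t : ℕ) (i : Fin n) :
    countVec S xstar (t+1) i =
      countVec S xstar t i + (if xstar i ≠ 0 ∧ i ∉ S t then 1 else 0) := by
  unfold countVec
  rw [Finset.range_add_one, Finset.filter_insert]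
  split
  · rw [Finset.card_insert_of_notMem (by simp)]
  · simp

/-- Upper bound on the counting vector for a SEA trajectory under the sharp
recovery condition (H_r'). -/
theorem sea_counting_upper_bound {m n k : ℕ} (hm : 0 < m) (hk : 0 < k) (hkn : k < n)
    (A : Matrix (Fin m) (Fin n) ℝ)
    (xstar : Fin n → ℝ) (hspars : (spt xstar).card ≤ k) (hne : (spt xstar).Nonempty)
    (e : Fin m → ℝ) (y : Fin m → ℝ) (hy : y = A.mulVec xstar + e)
    (η : ℝ) (hη : 0 < η) (X0 : Fin n → ℝ)
    (traj : SEATraj k A y η X0)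
    (bmax : ℝ)
    (hbmax : ∀ t, supNorm (gradNoise A y xstar η (traj.S t) (traj.x t)) ≤ bmax)
    (hsmall : bmax < 1 / (2 * ∑ i ∈ spt xstar, 1 / (η * |xstar i|))) :
    ∀ i ∈ spt xstar, ∀ t : ℕ, (t : ℝ) ≤ TmaxP k xstar X0 η bmax →
      (countVec traj.S xstar t i : ℝ) ≤ cbar k xstar X0 η bmax i + 1 := by
  have hn : 0 < n := lt_trans hk hkn
  set b : ℕ → Fin n → ℝ := fun t => gradNoise A y xstar η (traj.S t) (traj.x t) with hb
  -- bmax is nonnegative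
  have hb_abs : ∀ t i, |b t i| ≤ bmax := fun t i => (abs_le_supNorm (b t) i).trans (hbmax t)
  have hbmax0 : 0 ≤ bmax := le_trans (abs_nonneg _) (hb_abs 0 ⟨0, hn⟩)
  -- positivity of the sum Σ 1/(η|x*_i|)
  have hterm : ∀ i ∈ spt xstar, 0 < η * |xstar i| := by
    intro i hi
    have : xstar i ≠ 0 := by simpa [spt] using hi
    positivity
  have hsum_pos : 0 < ∑ i ∈ spt xstar, 1 / (η * |xstar i|) :=
    Finset.sum_pos (fun i hi => by have := hterm i hi; positivity) hne
  have hden : 0 < 1 - 2 * bmax * ∑ i ∈ spt xstar, 1 / (η * |xstar i|) := by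
    rw [lt_div_iff₀ (by positivity)] at hsmall
    nlinarith
  -- maxOff is well-defined and nonnegative
  have hex_off : ∃ j : Fin n, xstar j = 0 := by
    by_contra h
    push_neg at h
    have : spt xstar = Finset.univ := by
      apply Finset.eq_univ_of_forall
      intro i; simp [spt, h i]
    rw [this, Finset.card_univ, Fintype.card_fin] at hspars
    omega
  have hoffne : Nonempty {j : Fin n // xstar j = 0} := ⟨⟨hex_off.choose, hex_off.choose_spec⟩⟩
  have hmaxOff_le : ∀ j : Fin n, xstar j = 0 → |X0 j| ≤ maxOff xstar X0 := by
    intro j hj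
    exact le_ciSup (Set.Finite.bddAbove (Set.finite_range (fun j : {j : Fin n // xstar j = 0} => |X0 j.1|))) ⟨j, hj⟩
  have hmaxOff0 : 0 ≤ maxOff xstar X0 :=
    le_trans (abs_nonneg _) (hmaxOff_le hex_off.choose hex_off.choose_spec)
  set T' := TmaxP k xstar X0 η bmax with hT'
  have hT'0 : 0 ≤ T' := by
    rw [hT', TmaxP]
    apply div_nonneg _ hden.le
    have : 0 ≤ ∑ i ∈ spt xstar, (maxOff xstar X0 + |X0 i|) / (η * |xstar i|) :=
      Finset.sum_nonneg (fun i hi => div_nonneg (by positivity) (hterm i hi).le)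
    positivity
  have hcbar0 : ∀ i ∈ spt xstar, 0 ≤ cbar k xstar X0 η bmax i := by
    intro i hi
    rw [cbar]
    apply div_nonneg _ (hterm i hi).le
    positivity
  -- componentwise recursion
  have hrec : ∀ t i, traj.X (t+1) i =
      traj.X t i + b t i - oracleUpd xstar η (traj.S t) i := by
    intro t i
    have h := congrFun (traj.X_upd t) i
    rw [h]
    simp only [hb, gradNoise, Pi.sub_apply, Pi.smul_apply, smul_eq_mul]
    ring
  -- closed forms
  have hXon : ∀ i, xstar i ≠ 0 → ∀ t, traj.X t i =
      X0 i + η * xstar i * (countVec traj.S xstar t i : ℝ) + ∑ t' ∈ Finset.range t, b t' i := by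
    intro i hi t
    induction t with
    | zero => simp [traj.X_init, countVec]
    | succ t ih =>
      rw [hrec t i, ih, countVec_succ, Finset.sum_range_succ, oracleUpd]
      by_cases hS : i ∉ traj.S t
      · rw [if_pos ⟨hi, hS⟩, if_pos ⟨hi, hS⟩]
        push_cast
        ring
      · rw [if_neg (by tauto), if_neg (by tauto)]
        push_cast
        ring
  have hXoff : ∀ j, xstar j = 0 → ∀ t, traj.X t j =
      X0 j + ∑ t' ∈ Finset.range t, b t' j := by
    intro j hj t
    induction t with
    | zero => simp [traj.X_init]
    | succ t ih =>
      rw [hrec t j, ih, Finset.sum_range_succ, oracleUpd]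
      rw [if_neg (by tauto)]
      ring
  have hsum_b : ∀ t i, |∑ t' ∈ Finset.range t, b t' i| ≤ t * bmax := by
    intro t i
    calc |∑ t' ∈ Finset.range t, b t' i| ≤ ∑ t' ∈ Finset.range t, |b t' i| :=
          Finset.abs_sum_le_sum_abs _ _
      _ ≤ ∑ _t' ∈ Finset.range t, bmax := Finset.sum_le_sum (fun t' _ => hb_abs t' i)
      _ = t * bmax := by rw [Finset.sum_const, Finset.card_range]; ring
  -- bound on off-support entries
  have hoff_bd : ∀ t : ℕ, ∀ j, xstar j = 0 → |traj.X t j| ≤ maxOff xstar X0 + t * bmax := by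
    intro t j hj
    rw [hXoff j hj t]
    calc |X0 j + ∑ t' ∈ Finset.range t, b t' j| ≤ |X0 j| + |∑ t' ∈ Finset.range t, b t' j| :=
          abs_add_le _ _
      _ ≤ maxOff xstar X0 + t * bmax := add_le_add (hmaxOff_le j hj) (hsum_b t j)
  -- key lemma: if the count exceeds cbar at time t ≤ T', then i ∈ S t
  have key : ∀ i ∈ spt xstar, ∀ t : ℕ, (t : ℝ) ≤ T' →
      cbar k xstar X0 η bmax i < (countVec traj.S xstar t i : ℝ) → i ∈ traj.S t := by
    intro i hi t ht hc
    have hxi : xstar i ≠ 0 := by simpa [spt] using hi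
    have hηxi : 0 < η * |xstar i| := hterm i hi
    -- lower bound on |X t i|
    have hlow : η * |xstar i| * (countVec traj.S xstar t i : ℝ) - |X0 i| - t * bmax ≤ |traj.X t i| := by
      have h1 : |η * xstar i * (countVec traj.S xstar t i : ℝ)| =
          η * |xstar i| * (countVec traj.S xstar t i : ℝ) := by
        rw [abs_mul, abs_mul, abs_of_pos hη, Nat.abs_cast]
      have h2 := hXon i hxi t
      have h3 : η * xstar i * (countVec traj.S xstar t i : ℝ) =
          traj.X t i - X0 i - ∑ t' ∈ Finset.range t, b t' i := by rw [h2]; ring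
      have h4 : η * |xstar i| * (countVec traj.S xstar t i : ℝ) ≤
          |traj.X t i| + |X0 i| + |∑ t' ∈ Finset.range t, b t' i| := by
        rw [← h1, h3]
        calc |traj.X t i - X0 i - ∑ t' ∈ Finset.range t, b t' i|
            ≤ |traj.X t i - X0 i| + |∑ t' ∈ Finset.range t, b t' i| := abs_sub _ _
          _ ≤ |traj.X t i| + |X0 i| + |∑ t' ∈ Finset.range t, b t' i| := by
              have := abs_sub (traj.X t i) (X0 i)
              linarith
      have := hsum_b t i
      linarith
    -- the count bound gives strict inequality
    have hcb : maxOff xstar X0 + |X0 i| + 2 * T' * bmax <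
        η * |xstar i| * (countVec traj.S xstar t i : ℝ) := by
      have := (div_lt_iff₀ hηxi).mp (by rw [cbar] at hc; exact hc)
      linarith [mul_comm (maxOff xstar X0 + |X0 i| + 2 * T' * bmax) (η * |xstar i|)]
    have hstrict : maxOff xstar X0 + t * bmax < |traj.X t i| := by
      have h2Tt : (t : ℝ) * bmax ≤ T' * bmax := mul_le_mul_of_nonneg_right ht hbmax0
      linarith
    -- now show i ∈ S t
    by_contra hiS
    have hsub : traj.S t ⊆ spt xstar := by
      intro j hj
      by_contra hjspt
      have hxj : xstar j = 0 := by
        by_contra h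
        exact hjspt (by simp [spt, h])
      have h1 := traj.sel t j hj i hiS
      have h2 := hoff_bd t j hxj
      linarith
    have hcard : (spt xstar).card = k := le_antisymm hspars (by
      rw [← traj.card_S t]; exact Finset.card_le_card hsub)
    have heq : traj.S t = spt xstar :=
      Finset.eq_of_subset_of_card_le hsub (by rw [hcard, traj.card_S t])
    exact hiS (heq ▸ hi)
  -- main induction
  intro i hi t
  induction t with
  | zero =>
    intro _
    simp only [countVec, Finset.range_zero, Finset.filter_empty, Finset.card_empty,
      Nat.cast_zero]
    linarith [hcbar0 i hi]
  | succ t ih =>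
    intro ht
    have ht' : (t : ℝ) ≤ T' := by
      have : (t : ℝ) ≤ (t : ℝ) + 1 := by linarith
      calc (t : ℝ) ≤ ((t + 1 : ℕ) : ℝ) := by push_cast; linarith
        _ ≤ T' := ht
    have ihc := ih ht'
    rw [countVec_succ]
    by_cases hinc : xstar i ≠ 0 ∧ i ∉ traj.S t
    · rw [if_pos hinc]
      have hle : (countVec traj.S xstar t i : ℝ) ≤ cbar k xstar X0 η bmax i := by
        by_contra h
        push_neg at h
        exact hinc.2 (key i hi t ht' h)
      push_cast
      linarith
    · rw [if_neg hinc]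
      push_cast
      push_cast at ihc
      linarith

end
end

section
/- Assume 2k + 1 ≤ n and A satisfies the (2k+1)-RIP (δ_{2k+1} < 1). Then for every SEA trajectory and every t ≥ 0, ‖(x^t − x*)_{S^t}‖₂ ≤ (δ_{2k}/(1−δ_k)) · ‖u^t‖₂/η + (√(1+δ_k)/(1−δ_k)) · ‖e‖₂, where (z)_{S^t} denotes the restriction of z ∈ ℝⁿ to the coordinates in S^t. -/
noncomputable section
open Finset Matrix

/-- The `l`-th restricted isometry constant of `A`: the smallest `δ ≥ 0` such that
`(1-δ)‖x‖₂² ≤ ‖Ax‖₂² ≤ (1+δ)‖x‖₂²` for every `x` with at most `l` nonzero entries. -/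
def ripConst {m n : ℕ} (A : Matrix (Fin m) (Fin n) ℝ) (l : ℕ) : ℝ :=
  sInf {δ : ℝ | 0 ≤ δ ∧ ∀ x : Fin n → ℝ, (spt x).card ≤ l →
    (1 - δ) * ∑ i, (x i) ^ 2 ≤ ∑ j, (A.mulVec x j) ^ 2 ∧
    ∑ j, (A.mulVec x j) ^ 2 ≤ (1 + δ) * ∑ i, (x i) ^ 2}

open WithLp RealInnerProductSpace

/-!
Write `v` for `x - x*` restricted to `S` and `w` for `x*` restricted to the complement of `S`,
so that `x - x* = v - w` and `‖u‖ = η ‖w‖`. Since `x` is the least-squares fit on `S`, the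
residual `A v - A w - e` is orthogonal to `A v`, hence `‖A v‖² = ⟪A v, A w⟫ + ⟪A v, e⟫`.
The RIP bounds `‖A v‖²` below by `(1 - δ_k) ‖v‖²`, the cross term by `δ_{2k} ‖v‖ ‖w‖`
(polarization, `v` and `w` having disjoint supports), and the noise term by
`√(1 + δ_k) ‖v‖ ‖e‖`; dividing by `‖v‖` gives the bound.
-/

section InnerProductSpace

variable {E F : Type*} [NormedAddCommGroup E] [InnerProductSpace ℝ E]
  [NormedAddCommGroup F] [InnerProductSpace ℝ F]

theorem inner_eq_zero_of_forall_norm_le_norm_add_smul {r z : F}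
    (h : ∀ s : ℝ, ‖r‖ ≤ ‖r + s • z‖) : ⟪r, z⟫ = 0 := by
  have hquad : ∀ s : ℝ, 0 ≤ ‖z‖ ^ 2 * (s * s) + 2 * ⟪r, z⟫ * s + 0 := fun s => by
    have hs := sq_le_sq' (by linarith [norm_nonneg r, norm_nonneg (r + s • z)]) (h s)
    rw [norm_add_sq_real, norm_smul, real_inner_smul_right, mul_pow, Real.norm_eq_abs,
      sq_abs] at hs
    linarith
  have := discrim_le_zero hquad
  rw [discrim] at this
  nlinarith [sq_nonneg ⟪r, z⟫]

theorem inner_map_le_of_near_isometry (T : E →ₗ[ℝ] F) {v w : E} (hvw : ⟪v, w⟫ = 0) {δ : ℝ}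
    (hlower : ∀ a b : ℝ, (1 - δ) * ‖a • v + b • w‖ ^ 2 ≤ ‖T (a • v + b • w)‖ ^ 2)
    (hupper : ∀ a b : ℝ, ‖T (a • v + b • w)‖ ^ 2 ≤ (1 + δ) * ‖a • v + b • w‖ ^ 2) :
    ⟪T v, T w⟫ ≤ δ * ‖v‖ * ‖w‖ := by
  have hnorm : ∀ a b : ℝ, ‖a • v + b • w‖ ^ 2 = a ^ 2 * ‖v‖ ^ 2 + b ^ 2 * ‖w‖ ^ 2 := fun a b => by
    rw [norm_add_sq_real, real_inner_smul_left, real_inner_smul_right, hvw, norm_smul,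
      norm_smul, mul_pow, mul_pow, Real.norm_eq_abs, Real.norm_eq_abs, sq_abs, sq_abs]
    ring
  have himage : ∀ a b : ℝ, ‖T (a • v + b • w)‖ ^ 2 =
      a ^ 2 * ‖T v‖ ^ 2 + 2 * a * b * ⟪T v, T w⟫ + b ^ 2 * ‖T w‖ ^ 2 := fun a b => by
    rw [map_add, map_smul, map_smul, norm_add_sq_real, real_inner_smul_left,
      real_inner_smul_right, norm_smul, norm_smul, mul_pow, mul_pow, Real.norm_eq_abs,
      Real.norm_eq_abs, sq_abs, sq_abs]
    ring
  rcases (mul_nonneg (norm_nonneg v) (norm_nonneg w)).eq_or_lt with hzero | hpos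
  · rcases mul_eq_zero.mp hzero.symm with hv | hw
    · simp [norm_eq_zero.mp hv]
    · simp [norm_eq_zero.mp hw]
  -- polarization with `p = ‖w‖ v ± ‖v‖ w`, both of squared norm `2 ‖v‖² ‖w‖²`
  have hplus := hupper ‖w‖ ‖v‖
  have hminus := hlower ‖w‖ (-‖v‖)
  rw [hnorm, himage] at hplus hminus
  have key : ‖v‖ * ‖w‖ * ⟪T v, T w⟫ ≤ ‖v‖ * ‖w‖ * (δ * ‖v‖ * ‖w‖) := by nlinarith
  exact le_of_mul_le_mul_left key hpos

end InnerProductSpace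

theorem le_sInf_mul_of_forall_le_mul {T : Set ℝ} (hT : T.Nonempty) {c s : ℝ} (hs : 0 ≤ s)
    (h : ∀ δ ∈ T, c ≤ δ * s) : c ≤ sInf T * s := by
  rw [mul_comm, ← smul_eq_mul, ← Real.sInf_smul_of_nonneg hs]
  refine le_csInf hT.smul_set ?_
  rintro _ ⟨δ, hδ, rfl⟩
  simpa only [smul_eq_mul, mul_comm s] using h δ hδ

section Sparse

@[simp]
theorem mem_spt {d : ℕ} {v : Fin d → ℝ} {i : Fin d} : i ∈ spt v ↔ v i ≠ 0 := by
  simp [spt]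

theorem spt_subset_iff {d : ℕ} {v : Fin d → ℝ} {S : Finset (Fin d)} :
    spt v ⊆ S ↔ ∀ i ∉ S, v i = 0 := by
  simp only [Finset.subset_iff, mem_spt]
  exact forall_congr' fun i => not_imp_comm

theorem spt_smul_add_smul_subset {d : ℕ} (a b : ℝ) (v w : Fin d → ℝ) :
    spt (a • v + b • w) ⊆ spt v ∪ spt w := by
  intro i
  simp only [Finset.mem_union, mem_spt, Pi.add_apply, Pi.smul_apply, smul_eq_mul]
  contrapose!
  rintro ⟨hv, hw⟩
  simp [hv, hw]

theorem sum_sq_eq_norm_toLp_sq {d : ℕ} (v : Fin d → ℝ) : ∑ i, v i ^ 2 = ‖toLp 2 v‖ ^ 2 :=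
  (EuclideanSpace.real_norm_sq_eq _).symm

theorem l2norm_eq_norm_toLp {d : ℕ} (v : Fin d → ℝ) : l2norm v = ‖toLp 2 v‖ := by
  rw [l2norm, sum_sq_eq_norm_toLp_sq, Real.sqrt_sq (norm_nonneg _)]

theorem norm_toLp_indicator {d : ℕ} (S : Finset (Fin d)) (f : Fin d → ℝ) :
    ‖toLp 2 ((S : Set (Fin d)).indicator f)‖ = √(∑ i ∈ S, f i ^ 2) := by
  rw [← l2norm_eq_norm_toLp, l2norm, ← Finset.sum_indicator_subset _ (subset_univ S)]
  congr 1
  refine Finset.sum_congr rfl fun i _ => ?_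
  by_cases hi : i ∈ S <;> simp [hi]

end Sparse

section RIP

variable {m n : ℕ} (A : Matrix (Fin m) (Fin n) ℝ)

def IsRIPBound (l : ℕ) (δ : ℝ) : Prop :=
  0 ≤ δ ∧ ∀ x : Fin n → ℝ, (spt x).card ≤ l →
    (1 - δ) * ∑ i, (x i) ^ 2 ≤ ∑ j, (A.mulVec x j) ^ 2 ∧
    ∑ j, (A.mulVec x j) ^ 2 ≤ (1 + δ) * ∑ i, (x i) ^ 2

theorem ripConst_eq_sInf (l : ℕ) : ripConst A l = sInf {δ | IsRIPBound A l δ} := rfl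

variable {A}

theorem IsRIPBound.mono {l l' : ℕ} {δ : ℝ} (h : IsRIPBound A l δ) (hl : l' ≤ l) :
    IsRIPBound A l' δ :=
  ⟨h.1, fun x hx => h.2 x (hx.trans hl)⟩

variable (A)

theorem isRIPBound_one_add_sum_sq (l : ℕ) : IsRIPBound A l (1 + ∑ j, ∑ i, A j i ^ 2) := by
  have hF : 0 ≤ ∑ j, ∑ i, A j i ^ 2 := by positivity
  refine ⟨by positivity, fun x _ => ⟨?_, ?_⟩⟩
  · nlinarith [Finset.sum_nonneg fun i (_ : i ∈ univ) => sq_nonneg (x i),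
      Finset.sum_nonneg fun j (_ : j ∈ univ) => sq_nonneg ((A *ᵥ x) j)]
  · have hrow : ∀ j, (A *ᵥ x) j ^ 2 ≤ (∑ i, A j i ^ 2) * ∑ i, x i ^ 2 := fun j =>
      Finset.sum_mul_sq_le_sq_mul_sq univ (A j) x
    calc ∑ j, (A *ᵥ x) j ^ 2 ≤ (∑ j, ∑ i, A j i ^ 2) * ∑ i, x i ^ 2 := by
          rw [Finset.sum_mul]; exact Finset.sum_le_sum fun j _ => hrow j
      _ ≤ (1 + (1 + ∑ j, ∑ i, A j i ^ 2)) * ∑ i, x i ^ 2 := by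
          gcongr; linarith

theorem ripConst_nonneg (l : ℕ) : 0 ≤ ripConst A l :=
  Real.sInf_nonneg fun _ hδ => hδ.1

theorem ripConst_mono {l l' : ℕ} (hl : l' ≤ l) : ripConst A l' ≤ ripConst A l :=
  csInf_le_csInf ⟨0, fun _ hδ => hδ.1⟩ ⟨_, isRIPBound_one_add_sum_sq A l⟩
    fun _ (hδ : IsRIPBound A l _) => hδ.mono hl

theorem isRIPBound_ripConst (l : ℕ) : IsRIPBound A l (ripConst A l) := by
  have hne : {δ | IsRIPBound A l δ}.Nonempty := ⟨_, isRIPBound_one_add_sum_sq A l⟩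
  refine ⟨ripConst_nonneg A l, fun x hx => ⟨?_, ?_⟩⟩
  · have := le_sInf_mul_of_forall_le_mul hne (c := ∑ i, x i ^ 2 - ∑ j, (A *ᵥ x) j ^ 2)
      (s := ∑ i, x i ^ 2) (by positivity) fun δ (hδ : IsRIPBound A l δ) => by
        linarith [(hδ.2 x hx).1]
    rw [← ripConst_eq_sInf] at this
    linarith
  · have := le_sInf_mul_of_forall_le_mul hne (c := ∑ j, (A *ᵥ x) j ^ 2 - ∑ i, x i ^ 2)
      (s := ∑ i, x i ^ 2) (by positivity) fun δ (hδ : IsRIPBound A l δ) => by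
        linarith [(hδ.2 x hx).2]
    rw [← ripConst_eq_sInf] at this
    linarith

end RIP

section RIPGeometry

variable {m n : ℕ} {A : Matrix (Fin m) (Fin n) ℝ} {l : ℕ} {δ : ℝ}

theorem IsRIPBound.le_norm_sq (h : IsRIPBound A l δ) {x : Fin n → ℝ} (hx : (spt x).card ≤ l) :
    (1 - δ) * ‖toLp 2 x‖ ^ 2 ≤ ‖toLp 2 (A *ᵥ x)‖ ^ 2 := by
  simpa only [sum_sq_eq_norm_toLp_sq] using (h.2 x hx).1

theorem IsRIPBound.norm_sq_le (h : IsRIPBound A l δ) {x : Fin n → ℝ} (hx : (spt x).card ≤ l) :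
    ‖toLp 2 (A *ᵥ x)‖ ^ 2 ≤ (1 + δ) * ‖toLp 2 x‖ ^ 2 := by
  simpa only [sum_sq_eq_norm_toLp_sq] using (h.2 x hx).2

theorem IsRIPBound.norm_le (h : IsRIPBound A l δ) {x : Fin n → ℝ} (hx : (spt x).card ≤ l) :
    ‖toLp 2 (A *ᵥ x)‖ ≤ √(1 + δ) * ‖toLp 2 x‖ := by
  rw [← Real.sqrt_sq (norm_nonneg (toLp 2 (A *ᵥ x))), ← Real.sqrt_sq (norm_nonneg (toLp 2 x)),
    ← Real.sqrt_mul (by linarith [h.1])]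
  exact Real.sqrt_le_sqrt (h.norm_sq_le hx)

theorem IsRIPBound.inner_le (h : IsRIPBound A l δ) {v w : Fin n → ℝ}
    (hvw : Disjoint (spt v) (spt w)) (hcard : (spt v).card + (spt w).card ≤ l) :
    ⟪toLp 2 (A *ᵥ v), toLp 2 (A *ᵥ w)⟫ ≤ δ * ‖toLp 2 v‖ * ‖toLp 2 w‖ := by
  have hcomb : ∀ a b : ℝ, (spt (a • v + b • w)).card ≤ l := fun a b =>
    ((card_le_card (spt_smul_add_smul_subset a b v w)).trans (card_union_le _ _)).trans hcard
  have horth : ⟪toLp 2 v, toLp 2 w⟫ = 0 := by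
    rw [PiLp.inner_apply]
    refine Finset.sum_eq_zero fun i _ => ?_
    by_cases hv : v i = 0
    · simp [hv]
    · have hw : w i = 0 := not_not.mp fun hw =>
        disjoint_left.mp hvw (mem_spt.mpr hv) (mem_spt.mpr hw)
      simp [hw]
  refine inner_map_le_of_near_isometry (toEuclideanLin A) horth (fun a b => ?_) (fun a b => ?_)
  · rw [← toLp_smul, ← toLp_smul, ← toLp_add]
    exact h.le_norm_sq (hcomb a b)
  · rw [← toLp_smul, ← toLp_smul, ← toLp_add]
    exact h.norm_sq_le (hcomb a b)

end RIPGeometry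

section LeastSquares

variable {m n : ℕ} (A : Matrix (Fin m) (Fin n) ℝ) (y : Fin m → ℝ) {S : Finset (Fin n)}

theorem inner_residual_mulVec_eq_zero {x : Fin n → ℝ} (hx : ∀ i ∉ S, x i = 0)
    (hmin : ∀ z : Fin n → ℝ, (∀ i, i ∉ S → z i = 0) →
      l2norm (A *ᵥ x - y) ≤ l2norm (A *ᵥ z - y))
    {z : Fin n → ℝ} (hz : ∀ i ∉ S, z i = 0) :
    ⟪toLp 2 (A *ᵥ x - y), toLp 2 (A *ᵥ z)⟫ = 0 := by
  refine inner_eq_zero_of_forall_norm_le_norm_add_smul fun s => ?_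
  have hperturb := hmin (x + s • z) fun i hi => by simp [hx i hi, hz i hi]
  rw [l2norm_eq_norm_toLp, l2norm_eq_norm_toLp] at hperturb
  refine hperturb.trans_eq (congrArg norm ?_)
  rw [← toLp_smul, ← toLp_add, mulVec_add, mulVec_smul]
  abel_nf

end LeastSquares

section SupportError

variable {m n : ℕ} (A : Matrix (Fin m) (Fin n) ℝ) {S : Finset (Fin n)} {xstar x : Fin n → ℝ}
  {e y : Fin m → ℝ}

theorem norm_mulVec_sq_eq_inner_add_inner (hy : y = A *ᵥ xstar + e) (hx : ∀ i ∉ S, x i = 0)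
    (hmin : ∀ z : Fin n → ℝ, (∀ i, i ∉ S → z i = 0) →
      l2norm (A *ᵥ x - y) ≤ l2norm (A *ᵥ z - y))
    {v w : Fin n → ℝ} (hv : ∀ i ∉ S, v i = 0) (hvw : x - xstar = v - w) :
    ‖toLp 2 (A *ᵥ v)‖ ^ 2 = ⟪toLp 2 (A *ᵥ v), toLp 2 (A *ᵥ w)⟫ + ⟪toLp 2 (A *ᵥ v), toLp 2 e⟫ := by
  have horth := inner_residual_mulVec_eq_zero A y hx hmin hv
  have hres : A *ᵥ x - y = A *ᵥ v - (A *ᵥ w + e) := by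
    rw [hy, ← sub_sub, ← mulVec_sub, hvw, mulVec_sub]
    abel
  rw [hres, toLp_sub, toLp_add, inner_sub_left, inner_add_left, real_inner_self_eq_norm_sq,
    real_inner_comm (toLp 2 (A *ᵥ v)), real_inner_comm (toLp 2 (A *ᵥ v))] at horth
  linarith

theorem one_sub_ripConst_mul_norm_indicator_sub_le {k : ℕ} (hS : S.card ≤ k)
    (hspars : (spt xstar).card ≤ k) (hy : y = A *ᵥ xstar + e) (hx : ∀ i ∉ S, x i = 0)
    (hmin : ∀ z : Fin n → ℝ, (∀ i, i ∉ S → z i = 0) →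
      l2norm (A *ᵥ x - y) ≤ l2norm (A *ᵥ z - y)) :
    (1 - ripConst A k) * ‖toLp 2 ((S : Set (Fin n)).indicator (x - xstar))‖ ≤
      ripConst A (2 * k) * ‖toLp 2 ((S : Set (Fin n))ᶜ.indicator xstar)‖ +
        √(1 + ripConst A k) * ‖toLp 2 e‖ := by
  set v := (S : Set (Fin n)).indicator (x - xstar)
  set w := (S : Set (Fin n))ᶜ.indicator xstar
  have hv : ∀ i ∉ S, v i = 0 := fun i hi => Set.indicator_of_notMem (by simpa using hi) _
  have hvw : x - xstar = v - w := by
    ext i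
    by_cases hi : i ∈ S <;> simp [v, w, hi, hx]
  have hspt_v : spt v ⊆ S := spt_subset_iff.mpr hv
  have hspt_w : spt w ⊆ spt xstar := fun i hi =>
    mem_spt.mpr fun h => mem_spt.mp hi (by simp [w, h])
  have hdisj : Disjoint (spt v) (spt w) := disjoint_left.mpr fun i hiv hiw =>
    mem_spt.mp hiw (Set.indicator_of_notMem (by simpa using hspt_v hiv) _)
  have henergy := norm_mulVec_sq_eq_inner_add_inner A hy hx hmin hv hvw
  have hcard_v : (spt v).card ≤ k := (card_le_card hspt_v).trans hS
  have hlower := (isRIPBound_ripConst A k).le_norm_sq hcard_v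
  have hcross := (isRIPBound_ripConst A (2 * k)).inner_le hdisj (by
    linarith [card_le_card hspt_w])
  have hnoise := (real_inner_le_norm (toLp 2 (A *ᵥ v)) (toLp 2 e)).trans
    (mul_le_mul_of_nonneg_right ((isRIPBound_ripConst A k).norm_le hcard_v) (norm_nonneg _))
  rcases (norm_nonneg (toLp 2 v)).eq_or_lt with hzero | hpos
  · rw [← hzero, mul_zero]
    exact add_nonneg (mul_nonneg (ripConst_nonneg A _) (norm_nonneg _))
      (mul_nonneg (Real.sqrt_nonneg _) (norm_nonneg _))
  · refine le_of_mul_le_mul_right ?_ hpos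
    nlinarith

end SupportError

theorem oracleUpd_eq_smul_indicator {n : ℕ} (xstar : Fin n → ℝ) (η : ℝ) (S : Finset (Fin n)) :
    oracleUpd xstar η S = (-η) • (S : Set (Fin n))ᶜ.indicator xstar := by
  ext i
  by_cases hi : i ∈ S <;> by_cases h0 : xstar i = 0 <;> simp [oracleUpd, hi, h0]

theorem l2norm_oracleUpd {n : ℕ} (xstar : Fin n → ℝ) {η : ℝ} (hη : 0 < η) (S : Finset (Fin n)) :
    l2norm (oracleUpd xstar η S) = η * ‖toLp 2 ((S : Set (Fin n))ᶜ.indicator xstar)‖ := by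
  rw [oracleUpd_eq_smul_indicator, l2norm_eq_norm_toLp, toLp_smul, norm_smul, norm_neg,
    Real.norm_of_nonneg hη.le]

theorem sea_approximation_error_RIP_general {m n k : ℕ}
    (A : Matrix (Fin m) (Fin n) ℝ) (hRIP : ripConst A (2 * k + 1) < 1)
    (xstar : Fin n → ℝ) (hspars : (spt xstar).card ≤ k)
    (e : Fin m → ℝ) (y : Fin m → ℝ) (hy : y = A.mulVec xstar + e)
    (η : ℝ) (hη : 0 < η) (X0 : Fin n → ℝ)
    (traj : SEATraj k A y η X0) :
    ∀ t : ℕ,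
      Real.sqrt (∑ i ∈ traj.S t, (traj.x t i - xstar i) ^ 2) ≤
        (ripConst A (2 * k) / (1 - ripConst A k)) *
            l2norm (oracleUpd xstar η (traj.S t)) / η +
          (Real.sqrt (1 + ripConst A k) / (1 - ripConst A k)) * l2norm e := by
  intro t
  have hgap : 0 < 1 - ripConst A k := sub_pos.mpr ((ripConst_mono A (by omega)).trans_lt hRIP)
  have hbound := one_sub_ripConst_mul_norm_indicator_sub_le A (traj.card_S t).le hspars hy
    (traj.x_supp t) (traj.x_min t)
  rw [← norm_toLp_indicator, l2norm_oracleUpd xstar hη, l2norm_eq_norm_toLp]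
  have hrhs : ∀ a b : ℝ, ripConst A (2 * k) / (1 - ripConst A k) * (η * a) / η +
      √(1 + ripConst A k) / (1 - ripConst A k) * b =
        (ripConst A (2 * k) * a + √(1 + ripConst A k) * b) / (1 - ripConst A k) := fun a b => by
    field_simp
  rw [hrhs, le_div_iff₀ hgap, mul_comm]
  exact hbound

/-- Approximation error bound on the current support under the `(2k+1)`-RIP:
`‖(x^t − x*)_{S^t}‖₂ ≤ (δ_{2k}/(1−δ_k)) ‖u^t‖₂/η + (√(1+δ_k)/(1−δ_k)) ‖e‖₂`. -/
theorem sea_approximation_error_RIP {m n k : ℕ} (hm : 0 < m) (hk : 0 < k)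
    (hkn : 2 * k + 1 ≤ n)
    (A : Matrix (Fin m) (Fin n) ℝ) (hRIP : ripConst A (2 * k + 1) < 1)
    (xstar : Fin n → ℝ) (hspars : (spt xstar).card ≤ k) (hne : (spt xstar).Nonempty)
    (e : Fin m → ℝ) (y : Fin m → ℝ) (hy : y = A.mulVec xstar + e)
    (η : ℝ) (hη : 0 < η) (X0 : Fin n → ℝ)
    (traj : SEATraj k A y η X0) :
    ∀ t : ℕ,
      Real.sqrt (∑ i ∈ traj.S t, (traj.x t i - xstar i) ^ 2) ≤
        (ripConst A (2 * k) / (1 - ripConst A k)) *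
            l2norm (oracleUpd xstar η (traj.S t)) / η +
          (Real.sqrt (1 + ripConst A k) / (1 - ripConst A k)) * l2norm e :=
  sea_approximation_error_RIP_general A hRIP xstar hspars e y hy η hη X0 traj

end
end
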